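/- arXiv:2605.01103 — 2 statements merged into one kernel-verified Lean document; each statement's English description precedes it below -/
import Mathlib

section
/- (Projection theorem, part (ii).) Let ħ > 0 and S ∈ Sp(2n,ℝ), and let X and P be the orthogonal projections of the quantum blob S(B^{2n}(√ħ)) onto ℝⁿ_x and ℝⁿ_p. Write M = (SSᵀ)⁻¹ in n×n block form [[M_XX, M_XP],[M_PX, M_PP]]. Then the equality X^ħ = P holds if and only if M_XP = 0, which is the case if and only if S(B^{2n}(√ħ)) = M_L(B^{2n}(√ħ)) for some L ∈ GL(n,ℝ). -/
/-!
Write `G = S Sᵀ = [[A, B], [Bᵀ, D]]`. The blob `S(B(√ℏ))` is the ellipsoid `zᵀ G⁻¹ z ≤ ℏ`, its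
projections are the ellipsoids with matrices `A⁻¹` and `D⁻¹`, and the polar dual of the first is
`pᵀ A p ≤ ℏ`; an ellipsoid determines its matrix, so `X^ℏ = P` iff `A D = 1`. As `G` is
symmetric and symplectic, `G⁻¹ = [[D, -Bᵀ], [-B, A]]`, `A D = 1 + B²` and `Bᵀ D = D B`. Hence
`M_XP = -Bᵀ`, and `A D = 1` iff `B² = 0` iff `B = 0`, because `Bᵀ D B = D B² = 0` with `D`
positive definite. Finally `S(B(√ℏ)) = M_L(B(√ℏ))` iff `G = M_L M_Lᵀ = [[(LᵀL)⁻¹, 0], [0, LᵀL]]`,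
which for `B = 0` holds with any `L` such that `LᵀL = D`.
-/

open Matrix

noncomputable section

def polarDual (ℏ : ℝ) {n : ℕ} (X : Set (Fin n → ℝ)) : Set (Fin n → ℝ) :=
  {p | ∀ x ∈ X, p ⬝ᵥ x ≤ ℏ}

def stdJ (n : ℕ) : Matrix (Fin n ⊕ Fin n) (Fin n ⊕ Fin n) ℝ :=
  Matrix.fromBlocks 0 1 (-1) 0

def IsSymplectic {n : ℕ} (S : Matrix (Fin n ⊕ Fin n) (Fin n ⊕ Fin n) ℝ) : Prop :=
  Sᵀ * stdJ n * S = stdJ n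

def ballPhase (n : ℕ) (r : ℝ) : Set ((Fin n ⊕ Fin n) → ℝ) :=
  {z | ∑ i, z i ^ 2 ≤ r ^ 2}

def ML {n : ℕ} (L : Matrix (Fin n) (Fin n) ℝ) :
    Matrix (Fin n ⊕ Fin n) (Fin n ⊕ Fin n) ℝ :=
  Matrix.fromBlocks L⁻¹ 0 0 Lᵀ

section Ellipsoid

variable {ι κ : Type*} [Fintype ι] [Fintype κ]

def ellipsoid (M : Matrix ι ι ℝ) (c : ℝ) : Set (ι → ℝ) :=
  {x | x ⬝ᵥ M *ᵥ x ≤ c}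

lemma ballPhase_sqrt_eq_ellipsoid (n : ℕ) {c : ℝ} (hc : 0 ≤ c) :
    ballPhase n (Real.sqrt c) = ellipsoid 1 c := by
  ext z
  simp [ballPhase, ellipsoid, Real.sq_sqrt hc, dotProduct, sq]

lemma smul_dotProduct_mulVec_smul (M : Matrix ι ι ℝ) (t : ℝ) (x : ι → ℝ) :
    (t • x) ⬝ᵥ M *ᵥ (t • x) = t ^ 2 * (x ⬝ᵥ M *ᵥ x) := by
  rw [mulVec_smul, dotProduct_smul, smul_dotProduct, smul_eq_mul, smul_eq_mul]
  ring

/-- The image is described through the minimal-norm preimage `u = Rᵀ (R Rᵀ)⁻¹ x`: any other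
preimage `w` differs from `u` by a vector of `ker R`, which is orthogonal to `u`. -/
lemma image_mulVec_ellipsoid_one [DecidableEq ι] [DecidableEq κ] {R : Matrix κ ι ℝ}
    (hR : IsUnit (R * Rᵀ)) (c : ℝ) :
    R.mulVec '' ellipsoid 1 c = ellipsoid (R * Rᵀ)⁻¹ c := by
  have hRu : ∀ x, R *ᵥ (Rᵀ *ᵥ ((R * Rᵀ)⁻¹ *ᵥ x)) = x := fun x => by
    rw [mulVec_mulVec, mulVec_mulVec, mul_nonsing_inv _ ((isUnit_iff_isUnit_det _).mp hR),
      one_mulVec]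
  have hnorm : ∀ x, x ⬝ᵥ (R * Rᵀ)⁻¹ *ᵥ x
      = (Rᵀ *ᵥ ((R * Rᵀ)⁻¹ *ᵥ x)) ⬝ᵥ (Rᵀ *ᵥ ((R * Rᵀ)⁻¹ *ᵥ x)) := fun x => by
    rw [dotProduct_transpose_mulVec, hRu, dotProduct_comm]
  ext x
  simp only [ellipsoid, Set.mem_image, Set.mem_ofPred_eq, one_mulVec]
  constructor
  · rintro ⟨w, hw, rfl⟩
    set u := Rᵀ *ᵥ ((R * Rᵀ)⁻¹ *ᵥ (R *ᵥ w))
    have horth : u ⬝ᵥ (w - u) = 0 := by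
      rw [dotProduct_comm, dotProduct_transpose_mulVec, mulVec_sub, hRu, sub_self, dotProduct_zero]
    have hsplit : w ⬝ᵥ w = u ⬝ᵥ u + (w - u) ⬝ᵥ (w - u) := by
      have : w = u + (w - u) := by abel
      conv_lhs => rw [this]
      rw [add_dotProduct, dotProduct_add, dotProduct_add, dotProduct_comm (w - u) u, horth]
      ring
    have hnonneg : 0 ≤ (w - u) ⬝ᵥ (w - u) := by simpa using dotProduct_star_self_nonneg (w - u)
    rw [hnorm]
    change u ⬝ᵥ u ≤ c
    linarith
  · intro hx
    exact ⟨_, by rwa [hnorm] at hx, hRu x⟩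

lemma ellipsoid_subset_ellipsoid_iff {P Q : Matrix ι ι ℝ} (hP : P.PosDef) {c : ℝ} (hc : 0 < c) :
    ellipsoid P c ⊆ ellipsoid Q c ↔ ∀ x, x ⬝ᵥ Q *ᵥ x ≤ x ⬝ᵥ P *ᵥ x := by
  refine ⟨fun h x => ?_, fun h x hx => (h x).trans hx⟩
  rcases eq_or_ne x 0 with rfl | hx
  · simp
  have ha : 0 < x ⬝ᵥ P *ᵥ x := by simpa using hP.dotProduct_mulVec_pos hx
  set t := Real.sqrt (c / x ⬝ᵥ P *ᵥ x)
  have ht : t ^ 2 = c / x ⬝ᵥ P *ᵥ x := Real.sq_sqrt (by positivity)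
  have hmem : t • x ∈ ellipsoid Q c := h <| by
    simp only [ellipsoid, Set.mem_ofPred_eq, smul_dotProduct_mulVec_smul, ht]
    rw [div_mul_cancel₀ _ ha.ne']
  simp only [ellipsoid, Set.mem_ofPred_eq, smul_dotProduct_mulVec_smul, ht] at hmem
  rwa [div_mul_eq_mul_div, div_le_iff₀ ha, mul_le_mul_iff_right₀ hc] at hmem

lemma Matrix.IsSymm.eq_of_forall_dotProduct_mulVec_self_eq {P Q : Matrix ι ι ℝ} (hP : P.IsSymm)
    (hQ : Q.IsSymm) (h : ∀ x, x ⬝ᵥ P *ᵥ x = x ⬝ᵥ Q *ᵥ x) : P = Q := by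
  classical
  have hentry : ∀ (M : Matrix ι ι ℝ) i j,
      Pi.single i 1 ⬝ᵥ M *ᵥ Pi.single j 1 = M i j := fun M i j => by
    simp [mulVec_single, single_dotProduct]
  ext i j
  have hi := h (Pi.single i 1)
  have hj := h (Pi.single j 1)
  have hij := h (Pi.single i 1 + Pi.single j 1)
  simp only [mulVec_add, dotProduct_add, add_dotProduct, hentry] at hi hj hij
  linarith [hP.apply i j, hQ.apply i j]

lemma ellipsoid_inj {P Q : Matrix ι ι ℝ} (hP : P.PosDef) (hQ : Q.PosDef) {c : ℝ} (hc : 0 < c) :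
    ellipsoid P c = ellipsoid Q c ↔ P = Q := by
  refine ⟨fun h => ?_, fun h => h ▸ rfl⟩
  rw [Set.Subset.antisymm_iff, ellipsoid_subset_ellipsoid_iff hP hc,
    ellipsoid_subset_ellipsoid_iff hQ hc] at h
  exact IsSymm.eq_of_forall_dotProduct_mulVec_self_eq (isHermitian_iff_isSymm.mp hP.isHermitian)
    (isHermitian_iff_isSymm.mp hQ.isHermitian) fun x => le_antisymm (h.2 x) (h.1 x)

/-- `⊇` is the inequality `0 ≤ (p - M x)ᵀ M⁻¹ (p - M x)`; for `⊆`, test `p` against the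
boundary point of the ellipsoid in the direction `M⁻¹ p`. -/
lemma polarDual_ellipsoid {n : ℕ} {M : Matrix (Fin n) (Fin n) ℝ} (hM : M.PosDef) {c : ℝ}
    (hc : 0 < c) : polarDual c (ellipsoid M c) = ellipsoid M⁻¹ c := by
  have hMM : M * M⁻¹ = 1 := mul_nonsing_inv _ ((isUnit_iff_isUnit_det M).mp hM.isUnit)
  have hMinvM : M⁻¹ * M = 1 := nonsing_inv_mul _ ((isUnit_iff_isUnit_det M).mp hM.isUnit)
  have hMsymm : Mᵀ = M := isHermitian_iff_isSymm.mp hM.isHermitian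
  ext p
  simp only [polarDual, ellipsoid, Set.mem_ofPred_eq]
  constructor
  · intro hp
    set α := p ⬝ᵥ M⁻¹ *ᵥ p
    have hα : 0 ≤ α := by simpa using hM.inv.posSemidef.dotProduct_mulVec_nonneg p
    rcases hα.eq_or_lt with h0 | hαpos
    · exact h0 ▸ hc.le
    set t := Real.sqrt (c / α)
    have ht : t ^ 2 = c / α := Real.sq_sqrt (by positivity)
    have hq : (M⁻¹ *ᵥ p) ⬝ᵥ M *ᵥ (M⁻¹ *ᵥ p) = α := by
      rw [mulVec_mulVec, hMM, one_mulVec, dotProduct_comm]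
    have hpx : p ⬝ᵥ (t • (M⁻¹ *ᵥ p)) = t * α := by rw [dotProduct_smul, smul_eq_mul]
    have hle := hp (t • (M⁻¹ *ᵥ p)) (by
      rw [smul_dotProduct_mulVec_smul, hq, ht, div_mul_cancel₀ _ hαpos.ne'])
    rw [hpx] at hle
    have hsq : (t * α) ^ 2 = c * α := by
      rw [mul_pow, ht]; field_simp
    have htα : 0 ≤ t * α := by positivity
    have : c * α ≤ c * c := by rw [← hsq, sq]; exact mul_le_mul hle hle htα hc.le
    exact le_of_mul_le_mul_left this hc
  · intro hp x hx
    have hnonneg : 0 ≤ (p - M *ᵥ x) ⬝ᵥ M⁻¹ *ᵥ (p - M *ᵥ x) := by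
      simpa using hM.inv.posSemidef.dotProduct_mulVec_nonneg (p - M *ᵥ x)
    have hcross : (M *ᵥ x) ⬝ᵥ M⁻¹ *ᵥ p = p ⬝ᵥ x := by
      rw [dotProduct_comm, dotProduct_mulVec, ← mulVec_transpose, hMsymm, mulVec_mulVec, hMM,
        one_mulVec]
    have hexpand : (p - M *ᵥ x) ⬝ᵥ M⁻¹ *ᵥ (p - M *ᵥ x)
        = p ⬝ᵥ M⁻¹ *ᵥ p - 2 * (p ⬝ᵥ x) + x ⬝ᵥ M *ᵥ x := by
      rw [mulVec_sub, dotProduct_sub, sub_dotProduct, sub_dotProduct, hcross, mulVec_mulVec,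
        hMinvM, one_mulVec, dotProduct_comm (M *ᵥ x) x]
      ring
    linarith

lemma posDef_mul_transpose_of_isUnit [DecidableEq ι] {R : Matrix ι ι ℝ} (hR : IsUnit R) :
    (R * Rᵀ).PosDef := by
  simpa [conjTranspose_eq_transpose_of_trivial] using
    PosDef.mul_conjTranspose_self R (vecMul_injective_iff_isUnit.mpr hR)

lemma image_mulVec_ellipsoid_one_eq_iff [DecidableEq ι] {R R' : Matrix ι ι ℝ} (hR : IsUnit R)
    (hR' : IsUnit R') {c : ℝ} (hc : 0 < c) :
    R.mulVec '' ellipsoid 1 c = R'.mulVec '' ellipsoid 1 c ↔ R * Rᵀ = R' * R'ᵀ := by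
  have hpos := posDef_mul_transpose_of_isUnit hR
  have hpos' := posDef_mul_transpose_of_isUnit hR'
  rw [image_mulVec_ellipsoid_one hpos.isUnit, image_mulVec_ellipsoid_one hpos'.isUnit,
    ellipsoid_inj hpos.inv hpos'.inv hc]
  exact ⟨fun h => inv_inj h ((isUnit_iff_isUnit_det _).mp hpos.isUnit), fun h => h ▸ rfl⟩

lemma image_comp_image_mulVec_ellipsoid_one [DecidableEq ι] [DecidableEq κ] {S : Matrix ι ι ℝ}
    (hS : IsUnit S) {e : κ → ι} (he : Function.Injective e) (c : ℝ) :
    (fun z => z ∘ e) '' (S.mulVec '' ellipsoid 1 c) = ellipsoid ((S * Sᵀ).submatrix e e)⁻¹ c := by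
  have hRR : S.submatrix e id * (S.submatrix e id)ᵀ = (S * Sᵀ).submatrix e e := by
    rw [transpose_submatrix, ← submatrix_mul _ _ _ _ _ Function.bijective_id]
  rw [Set.image_image, ← hRR]
  exact image_mulVec_ellipsoid_one
    (hRR ▸ ((posDef_mul_transpose_of_isUnit hS).submatrix he).isUnit) c

end Ellipsoid

open scoped ComplexOrder MatrixOrder in
lemma Matrix.PosDef.eq_zero_of_conjTranspose_mul_mul_eq_zero {𝕜 m n : Type*} [RCLike 𝕜] [Fintype m]
    [DecidableEq m] [Fintype n] {C : Matrix m m 𝕜} (hC : C.PosDef) {B : Matrix m n 𝕜}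
    (h : Bᴴ * C * B = 0) : B = 0 := by
  obtain ⟨L, hL⟩ := CStarAlgebra.nonneg_iff_eq_star_mul_self.mp hC.posSemidef.nonneg
  have hLB : L * B = 0 := by
    rw [← conjTranspose_mul_self_eq_zero, conjTranspose_mul, Matrix.mul_assoc,
      ← Matrix.mul_assoc Lᴴ, ← star_eq_conjTranspose, ← hL, ← Matrix.mul_assoc, h]
  calc B = C⁻¹ * (C * B) := (nonsing_inv_mul_cancel_left _ _
          ((isUnit_iff_isUnit_det C).mp hC.isUnit)).symm
    _ = 0 := by rw [hL, Matrix.mul_assoc, hLB, Matrix.mul_zero, Matrix.mul_zero]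

lemma Matrix.IsSymm.toBlocks₂₁_eq_transpose {m n α : Type*} {G : Matrix (m ⊕ n) (m ⊕ n) α}
    (hG : G.IsSymm) : G.toBlocks₂₁ = G.toBlocks₁₂ᵀ := by
  ext i j
  exact (hG.apply _ _).symm

section Symplectic

variable {l R : Type*} [DecidableEq l] [Fintype l] [CommRing R]

lemma isSymplectic_iff_mem_symplecticGroup {n : ℕ} {S : Matrix (Fin n ⊕ Fin n) (Fin n ⊕ Fin n) ℝ} :
    IsSymplectic S ↔ S ∈ symplecticGroup (Fin n) ℝ := by
  have hJ : stdJ n = -J (Fin n) ℝ := by simp [stdJ, J, fromBlocks_neg]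
  rw [IsSymplectic, hJ, SymplecticGroup.mem_iff', Matrix.mul_neg, Matrix.neg_mul, neg_inj]

lemma SymplecticGroup.toBlocks₁₂_inv {A : Matrix (l ⊕ l) (l ⊕ l) R}
    (hA : A ∈ symplecticGroup l R) : (A⁻¹).toBlocks₁₂ = -(A.toBlocks₁₂)ᵀ := by
  rw [SymplecticGroup.inv_eq_symplectic_inv A hA, ← fromBlocks_toBlocks A]
  simp [J, fromBlocks_transpose, fromBlocks_multiply, fromBlocks_neg]

lemma SymplecticGroup.toBlocks_relations_of_isSymm {G : Matrix (l ⊕ l) (l ⊕ l) R}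
    (hG : G ∈ symplecticGroup l R) (hGs : G.IsSymm) :
    G.toBlocks₁₁ * G.toBlocks₂₂ = 1 + G.toBlocks₁₂ * G.toBlocks₁₂ ∧
      G.toBlocks₁₂ᵀ * G.toBlocks₂₂ = G.toBlocks₂₂ * G.toBlocks₁₂ := by
  rw [← fromBlocks_toBlocks G] at hG hGs
  obtain ⟨hA, hBC, -, hD⟩ := isSymm_fromBlocks_iff.mp hGs
  obtain ⟨-, hBD, hAD⟩ := SymplecticGroup.fromBlocks_mem_iff.mp hG
  rw [hA.eq, ← hBC, transpose_transpose] at hAD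
  rw [hD.eq] at hBD
  exact ⟨sub_eq_iff_eq_add.mp hAD, hBD⟩

end Symplectic

lemma toBlocks₁₂_eq_zero_iff_of_mem_symplecticGroup {l : Type*} [DecidableEq l] [Fintype l]
    {G : Matrix (l ⊕ l) (l ⊕ l) ℝ} (hG : G ∈ symplecticGroup l ℝ) (hGpos : G.PosDef) :
    G.toBlocks₁₂ = 0 ↔ G.toBlocks₁₁ = G.toBlocks₂₂⁻¹ := by
  obtain ⟨hAD, hBD⟩ :=
    SymplecticGroup.toBlocks_relations_of_isSymm hG (isHermitian_iff_isSymm.mp hGpos.isHermitian)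
  have hDpos : G.toBlocks₂₂.PosDef := hGpos.submatrix Sum.inr_injective
  have hinv : G.toBlocks₁₁ = G.toBlocks₂₂⁻¹ ↔ G.toBlocks₁₁ * G.toBlocks₂₂ = 1 :=
    ⟨fun h => h ▸ nonsing_inv_mul _ ((isUnit_iff_isUnit_det _).mp hDpos.isUnit),
      fun h => (inv_eq_left_inv h).symm⟩
  rw [hinv, hAD, add_eq_left]
  refine ⟨fun hB => by rw [hB, Matrix.mul_zero], fun hBB => ?_⟩
  refine hDpos.eq_zero_of_conjTranspose_mul_mul_eq_zero ?_
  rw [conjTranspose_eq_transpose_of_trivial, hBD, Matrix.mul_assoc, hBB, Matrix.mul_zero]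

lemma ML_mul_transpose {n : ℕ} (L : Matrix (Fin n) (Fin n) ℝ) :
    ML L * (ML L)ᵀ = fromBlocks (Lᵀ * L)⁻¹ 0 0 (Lᵀ * L) := by
  simp [ML, fromBlocks_transpose, fromBlocks_multiply, transpose_nonsing_inv, Matrix.mul_inv_rev]

lemma isUnit_ML {n : ℕ} {L : Matrix (Fin n) (Fin n) ℝ} (hL : IsUnit L) : IsUnit (ML L) := by
  have hdet := (isUnit_iff_isUnit_det L).mp hL
  rw [isUnit_iff_isUnit_det, ML, det_fromBlocks_zero₁₂, det_transpose]
  exact (isUnit_nonsing_inv_det L hdet).mul hdet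

lemma toBlocks₁₂_eq_zero_iff_exists_ML {n : ℕ} {G : Matrix (Fin n ⊕ Fin n) (Fin n ⊕ Fin n) ℝ}
    (hG : G ∈ symplecticGroup (Fin n) ℝ) (hGpos : G.PosDef) :
    G.toBlocks₁₂ = 0 ↔ ∃ L, IsUnit L ∧ G = ML L * (ML L)ᵀ := by
  refine ⟨fun hB => ?_, ?_⟩
  · have hA := (toBlocks₁₂_eq_zero_iff_of_mem_symplecticGroup hG hGpos).mp hB
    have hDpos : G.toBlocks₂₂.PosDef := hGpos.submatrix Sum.inr_injective
    open scoped MatrixOrder in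
    obtain ⟨L, hL⟩ := CStarAlgebra.nonneg_iff_eq_star_mul_self.mp hDpos.posSemidef.nonneg
    rw [star_eq_conjTranspose, conjTranspose_eq_transpose_of_trivial] at hL
    have hLu : IsUnit L := (isUnit_iff_isUnit_det L).mpr <| isUnit_det_of_left_inverse
      (B := G.toBlocks₂₂⁻¹ * Lᵀ) <| by
        rw [Matrix.mul_assoc, ← hL, nonsing_inv_mul _ ((isUnit_iff_isUnit_det _).mp hDpos.isUnit)]
    have hC : G.toBlocks₂₁ = 0 := by
      rw [(isHermitian_iff_isSymm.mp hGpos.isHermitian).toBlocks₂₁_eq_transpose, hB,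
        transpose_zero]
    refine ⟨L, hLu, ?_⟩
    rw [ML_mul_transpose, ← hL, ← hA]
    conv_lhs => rw [← fromBlocks_toBlocks G, hB, hC]
  · rintro ⟨L, -, rfl⟩
    rw [ML_mul_transpose, toBlocks_fromBlocks₁₂]

/-- Projection theorem, part (ii): with `X`, `P` the projections of the quantum blob
`S(B^{2n}(√ℏ))` and `M = (SSᵀ)⁻¹` in block form, `X^ℏ = P` holds iff the off-diagonal
block `M_XP` vanishes, which is the case iff `S(B^{2n}(√ℏ)) = M_L(B^{2n}(√ℏ))` for some
`L ∈ GL(n, ℝ)`. -/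
theorem statement11 (n : ℕ) (ℏ : ℝ) (hℏ : 0 < ℏ)
    (S : Matrix (Fin n ⊕ Fin n) (Fin n ⊕ Fin n) ℝ) (hS : IsSymplectic S) :
    (polarDual ℏ ((fun z => z ∘ Sum.inl) '' (S.mulVec '' ballPhase n (Real.sqrt ℏ)))
        = (fun z => z ∘ Sum.inr) '' (S.mulVec '' ballPhase n (Real.sqrt ℏ))
      ↔ ((S * Sᵀ)⁻¹).toBlocks₁₂ = 0) ∧
    (((S * Sᵀ)⁻¹).toBlocks₁₂ = 0 ↔
      ∃ L : Matrix (Fin n) (Fin n) ℝ, IsUnit L ∧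
        S.mulVec '' ballPhase n (Real.sqrt ℏ)
          = (ML L).mulVec '' ballPhase n (Real.sqrt ℏ)) := by
  have hSp : S ∈ symplecticGroup (Fin n) ℝ := isSymplectic_iff_mem_symplecticGroup.mp hS
  have hSu : IsUnit S := (isUnit_iff_isUnit_det S).mpr (SymplecticGroup.symplectic_det hSp)
  have hG : S * Sᵀ ∈ symplecticGroup (Fin n) ℝ := mul_mem hSp (SymplecticGroup.transpose_mem hSp)
  have hGpos : (S * Sᵀ).PosDef := posDef_mul_transpose_of_isUnit hSu
  have hApos : (S * Sᵀ).toBlocks₁₁.PosDef := hGpos.submatrix Sum.inl_injective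
  have hDpos : (S * Sᵀ).toBlocks₂₂.PosDef := hGpos.submatrix Sum.inr_injective
  have hM : ((S * Sᵀ)⁻¹).toBlocks₁₂ = 0 ↔ (S * Sᵀ).toBlocks₁₂ = 0 := by
    rw [SymplecticGroup.toBlocks₁₂_inv hG, neg_eq_zero, transpose_eq_zero]
  rw [ballPhase_sqrt_eq_ellipsoid n hℏ.le, hM]
  refine ⟨?_, ?_⟩
  · have hX : (fun z => z ∘ Sum.inl) '' (S.mulVec '' ellipsoid 1 ℏ)
        = ellipsoid (S * Sᵀ).toBlocks₁₁⁻¹ ℏ :=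
      image_comp_image_mulVec_ellipsoid_one hSu Sum.inl_injective ℏ
    have hP : (fun z => z ∘ Sum.inr) '' (S.mulVec '' ellipsoid 1 ℏ)
        = ellipsoid (S * Sᵀ).toBlocks₂₂⁻¹ ℏ :=
      image_comp_image_mulVec_ellipsoid_one hSu Sum.inr_injective ℏ
    rw [hX, hP, polarDual_ellipsoid hApos.inv hℏ,
      nonsing_inv_nonsing_inv _ ((isUnit_iff_isUnit_det _).mp hApos.isUnit),
      ellipsoid_inj hApos hDpos.inv hℏ, toBlocks₁₂_eq_zero_iff_of_mem_symplecticGroup hG hGpos]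
  · rw [toBlocks₁₂_eq_zero_iff_exists_ML hG hGpos]
    exact exists_congr fun L => and_congr_right fun hL =>
      (image_mulVec_ellipsoid_one_eq_iff hSu (isUnit_ML hL) hℏ).symm
end
end

section
/- Let ħ > 0 and let A, B be real symmetric positive definite n×n matrices. Set X = {x ∈ ℝⁿ : Ax·x ≤ ħ}, P = {p ∈ ℝⁿ : Bp·p ≤ ħ}, and let λ ≥ 1 satisfy λX^ħ ⊆ P. Then the ellipsoid Ω_λ = {(x,p) ∈ ℝ^{2n} : λ²Ax·x + λ^{−2}A⁻¹p·p ≤ ħ} is a quantum blob, and Ω_λ is contained in the ellipsoid {(x,p) : Ax·x + Bp·p ≤ ħ} (in particular Ω_λ ⊆ X × P). -/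
open Matrix

noncomputable section

/-!
Write `A = M²` with `M` symmetric. The block-diagonal matrix `S = diag(λ⁻¹M⁻¹, λM)` is
symplectic, and `S⁻¹ = diag(λM, λ⁻¹M⁻¹)` turns `|S⁻¹z|²` into the quadratic form defining `Ω_λ`,
so `Ω_λ = S(B(√ℏ))`. Expanding `A⁻¹(q - Ax)·(q - Ax) ≥ 0` shows that the `A⁻¹`-ellipsoid lies
in `X^ℏ`; hence `λX^ℏ ⊆ P` gives `λ²Bp·p ≤ A⁻¹p·p` by homogeneity, and with `λ ≥ 1` every point
of `Ω_λ` satisfies `Ax·x + Bp·p ≤ ℏ`.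
-/

namespace Matrix

variable {m : Type*} [Fintype m]

lemma PosDef.exists_isSymm_mul_self_eq [DecidableEq m] {A : Matrix m m ℝ} (hA : A.PosDef) :
    ∃ M : Matrix m m ℝ, M.IsSymm ∧ IsUnit M ∧ M * M = A := by
  open scoped MatrixOrder in
  exact ⟨CFC.sqrt A, (CFC.sqrt_nonneg A).posSemidef.isHermitian,
    (CFC.isUnit_sqrt_iff A hA.posSemidef.nonneg).2 hA.isUnit,
    CFC.sqrt_mul_sqrt_self A hA.posSemidef.nonneg⟩

lemma IsSymm.mulVec_dotProduct_mulVec {M : Matrix m m ℝ} (hM : M.IsSymm) (x : m → ℝ) :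
    M *ᵥ x ⬝ᵥ M *ᵥ x = (M * M) *ᵥ x ⬝ᵥ x := by
  rw [dotProduct_mulVec, ← mulVec_transpose, hM.eq, ← mulVec_mulVec]

lemma PosSemidef.mulVec_dotProduct_nonneg {A : Matrix m m ℝ} (hA : A.PosSemidef) (x : m → ℝ) :
    0 ≤ A *ᵥ x ⬝ᵥ x := by
  simpa [dotProduct_comm] using hA.dotProduct_mulVec_nonneg x

lemma PosDef.two_mul_dotProduct_le [DecidableEq m] {A : Matrix m m ℝ} (hA : A.PosDef)
    (q x : m → ℝ) :
    2 * (q ⬝ᵥ x) ≤ A⁻¹ *ᵥ q ⬝ᵥ q + A *ᵥ x ⬝ᵥ x := by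
  have hsymm : A⁻¹.IsSymm := hA.inv.isHermitian
  have hcancel : A⁻¹ *ᵥ A *ᵥ x = x := by
    rw [mulVec_mulVec, nonsing_inv_mul _ ((isUnit_iff_isUnit_det A).1 hA.isUnit), one_mulVec]
  have hexp : A⁻¹ *ᵥ (q - A *ᵥ x) ⬝ᵥ (q - A *ᵥ x)
      = A⁻¹ *ᵥ q ⬝ᵥ q - 2 * (q ⬝ᵥ x) + A *ᵥ x ⬝ᵥ x := by
    have hcross : A⁻¹ *ᵥ q ⬝ᵥ A *ᵥ x = q ⬝ᵥ x := by
      rw [dotProduct_comm, dotProduct_mulVec, ← mulVec_transpose, hsymm.eq, hcancel,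
        dotProduct_comm]
    rw [mulVec_sub, hcancel, sub_dotProduct, dotProduct_sub, dotProduct_sub, hcross,
      dotProduct_comm x q, dotProduct_comm x]
    ring
  linarith [hA.inv.posSemidef.mulVec_dotProduct_nonneg (q - A *ᵥ x)]

lemma PosDef.mulVec_dotProduct_le_of_sublevel_subset {P Q : Matrix m m ℝ} (hP : P.PosDef)
    {c : ℝ} (hc : 0 < c) (h : {p | P *ᵥ p ⬝ᵥ p ≤ c} ⊆ {p | Q *ᵥ p ⬝ᵥ p ≤ c}) (p : m → ℝ) :
    Q *ᵥ p ⬝ᵥ p ≤ P *ᵥ p ⬝ᵥ p := by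
  rcases eq_or_ne p 0 with rfl | hp
  · simp
  have hPp : 0 < P *ᵥ p ⬝ᵥ p := by simpa [dotProduct_comm] using hP.dotProduct_mulVec_pos hp
  have hscale : ∀ t : ℝ, ∀ R : Matrix m m ℝ, R *ᵥ (t • p) ⬝ᵥ (t • p) = t ^ 2 * (R *ᵥ p ⬝ᵥ p) :=
    fun t R => by simp only [mulVec_smul, smul_dotProduct, dotProduct_smul, smul_eq_mul]; ring
  set t := √(c / P *ᵥ p ⬝ᵥ p)
  have ht : t ^ 2 = c / P *ᵥ p ⬝ᵥ p := Real.sq_sqrt (by positivity)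
  have hboundary : t ^ 2 * (P *ᵥ p ⬝ᵥ p) = c := by rw [ht]; field_simp
  have hQ : t ^ 2 * (Q *ᵥ p ⬝ᵥ p) ≤ t ^ 2 * (P *ᵥ p ⬝ᵥ p) := by
    rw [← hscale, hboundary]
    exact h (show P *ᵥ (t • p) ⬝ᵥ (t • p) ≤ c by rw [hscale, hboundary])
  exact le_of_mul_le_mul_left hQ (by rw [ht]; positivity)

lemma mulVec_image_eq_preimage [DecidableEq m] {S T : Matrix m m ℝ} (hST : S * T = 1)
    (hTS : T * S = 1) (s : Set (m → ℝ)) : S.mulVec '' s = T.mulVec ⁻¹' s :=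
  congrFun (Set.image_eq_preimage_of_inverse (f := S.mulVec) (g := T.mulVec)
    (fun z => by rw [mulVec_mulVec, hTS, one_mulVec])
    (fun z => by rw [mulVec_mulVec, hST, one_mulVec])) s

end Matrix

section

variable {n : ℕ}

lemma sublevel_inv_subset_polarDual {A : Matrix (Fin n) (Fin n) ℝ} (hA : A.PosDef) (ℏ : ℝ) :
    {q | A⁻¹ *ᵥ q ⬝ᵥ q ≤ ℏ} ⊆ polarDual ℏ {x | A *ᵥ x ⬝ᵥ x ≤ ℏ} := fun q hq x hx => by
  linarith [hA.two_mul_dotProduct_le q x, show A⁻¹ *ᵥ q ⬝ᵥ q ≤ ℏ from hq,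
    show A *ᵥ x ⬝ᵥ x ≤ ℏ from hx]

lemma isSymplectic_fromBlocks_zero {P Q : Matrix (Fin n) (Fin n) ℝ} (h : Pᵀ * Q = 1) :
    IsSymplectic (fromBlocks P 0 0 Q) := by
  have h' : Qᵀ * P = 1 := by rw [← transpose_transpose P, ← transpose_mul, h, transpose_one]
  simp [IsSymplectic, stdJ, fromBlocks_transpose, fromBlocks_multiply, h, h']

lemma ballPhase_eq (r : ℝ) : ballPhase n r = {z | z ⬝ᵥ z ≤ r ^ 2} := by
  simp [ballPhase, dotProduct, sq]

lemma exists_isSymplectic_image_ballPhase {G : Matrix (Fin n) (Fin n) ℝ} (hG : G.PosDef)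
    {ℏ : ℝ} (hℏ : 0 ≤ ℏ) :
    ∃ S, IsSymplectic S ∧ S.mulVec '' ballPhase n (Real.sqrt ℏ) =
      {z | G *ᵥ (z ∘ Sum.inl) ⬝ᵥ (z ∘ Sum.inl) + G⁻¹ *ᵥ (z ∘ Sum.inr) ⬝ᵥ (z ∘ Sum.inr) ≤ ℏ} := by
  obtain ⟨M, hM, hMu, rfl⟩ := hG.exists_isSymm_mul_self_eq
  have hMdet := (isUnit_iff_isUnit_det M).1 hMu
  refine ⟨fromBlocks M⁻¹ 0 0 M, isSymplectic_fromBlocks_zero ?_, ?_⟩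
  · rw [transpose_nonsing_inv, hM.eq, nonsing_inv_mul _ hMdet]
  rw [mulVec_image_eq_preimage (T := fromBlocks M 0 0 M⁻¹), ballPhase_eq, Real.sq_sqrt hℏ,
    Matrix.mul_inv_rev]
  · ext z
    simp [fromBlocks_mulVec, hM.mulVec_dotProduct_mulVec, hM.inv.mulVec_dotProduct_mulVec]
  all_goals simp [fromBlocks_multiply, nonsing_inv_mul _ hMdet, mul_nonsing_inv _ hMdet]

/-- If `λ ≥ 1` satisfies `λX^ℏ ⊆ P` (with `X`, `P` the ellipsoids carried by `A`, `B`),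
then the rescaled ellipsoid `Ω_λ = {(x,p) : λ²Ax·x + λ⁻²A⁻¹p·p ≤ ℏ}` is a quantum blob
contained in `{(x,p) : Ax·x + Bp·p ≤ ℏ}`, in particular contained in `X × P`. -/
theorem statement16 (n : ℕ) (ℏ : ℝ) (hℏ : 0 < ℏ)
    (A B : Matrix (Fin n) (Fin n) ℝ) (hA : A.PosDef) (hB : B.PosDef)
    (lam : ℝ) (hlam : 1 ≤ lam)
    (hscale : (fun p : Fin n → ℝ => lam • p) ''
        polarDual ℏ {x : Fin n → ℝ | A.mulVec x ⬝ᵥ x ≤ ℏ}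
      ⊆ {p : Fin n → ℝ | B.mulVec p ⬝ᵥ p ≤ ℏ}) :
    (∃ S : Matrix (Fin n ⊕ Fin n) (Fin n ⊕ Fin n) ℝ, IsSymplectic S ∧
      {z : (Fin n ⊕ Fin n) → ℝ |
          lam ^ 2 * (A.mulVec (z ∘ Sum.inl) ⬝ᵥ (z ∘ Sum.inl))
            + (lam ^ 2)⁻¹ * (A⁻¹.mulVec (z ∘ Sum.inr) ⬝ᵥ (z ∘ Sum.inr)) ≤ ℏ}
        = S.mulVec '' ballPhase n (Real.sqrt ℏ)) ∧
    {z : (Fin n ⊕ Fin n) → ℝ |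
        lam ^ 2 * (A.mulVec (z ∘ Sum.inl) ⬝ᵥ (z ∘ Sum.inl))
          + (lam ^ 2)⁻¹ * (A⁻¹.mulVec (z ∘ Sum.inr) ⬝ᵥ (z ∘ Sum.inr)) ≤ ℏ}
      ⊆ {z | A.mulVec (z ∘ Sum.inl) ⬝ᵥ (z ∘ Sum.inl)
              + B.mulVec (z ∘ Sum.inr) ⬝ᵥ (z ∘ Sum.inr) ≤ ℏ} ∧
    {z : (Fin n ⊕ Fin n) → ℝ |
        lam ^ 2 * (A.mulVec (z ∘ Sum.inl) ⬝ᵥ (z ∘ Sum.inl))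
          + (lam ^ 2)⁻¹ * (A⁻¹.mulVec (z ∘ Sum.inr) ⬝ᵥ (z ∘ Sum.inr)) ≤ ℏ}
      ⊆ {z | A.mulVec (z ∘ Sum.inl) ⬝ᵥ (z ∘ Sum.inl) ≤ ℏ
              ∧ B.mulVec (z ∘ Sum.inr) ⬝ᵥ (z ∘ Sum.inr) ≤ ℏ} := by
  have hlam2 : 0 < lam ^ 2 := by positivity
  have hB_le : ∀ p, (lam ^ 2 • B) *ᵥ p ⬝ᵥ p ≤ A⁻¹ *ᵥ p ⬝ᵥ p :=
    hA.inv.mulVec_dotProduct_le_of_sublevel_subset hℏ fun p hp => by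
      simpa [smul_mulVec, mulVec_smul, sq, mul_assoc] using
        hscale ⟨p, sublevel_inv_subset_polarDual hA ℏ hp, rfl⟩
  have hsub : ∀ z : Fin n ⊕ Fin n → ℝ,
      lam ^ 2 * (A *ᵥ (z ∘ Sum.inl) ⬝ᵥ (z ∘ Sum.inl))
        + (lam ^ 2)⁻¹ * (A⁻¹ *ᵥ (z ∘ Sum.inr) ⬝ᵥ (z ∘ Sum.inr)) ≤ ℏ →
      A *ᵥ (z ∘ Sum.inl) ⬝ᵥ (z ∘ Sum.inl) + B *ᵥ (z ∘ Sum.inr) ⬝ᵥ (z ∘ Sum.inr) ≤ ℏ := by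
    intro z hz
    have hx := hA.posSemidef.mulVec_dotProduct_nonneg (z ∘ Sum.inl)
    have hp := hB_le (z ∘ Sum.inr)
    rw [smul_mulVec, smul_dotProduct, smul_eq_mul, ← le_inv_mul_iff₀ hlam2] at hp
    have hx' := le_mul_of_one_le_left hx (one_le_pow₀ hlam : 1 ≤ lam ^ 2)
    linarith
  obtain ⟨S, hS, hSball⟩ := exists_isSymplectic_image_ballPhase (hA.smul hlam2) hℏ.le
  refine ⟨⟨S, hS, ?_⟩, hsub, fun z hz => ?_⟩
  · have hinv : (lam ^ 2 • A)⁻¹ = (lam ^ 2)⁻¹ • A⁻¹ := inv_eq_left_inv <| by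
      rw [smul_mul_smul, inv_mul_cancel₀ hlam2.ne',
        nonsing_inv_mul _ ((isUnit_iff_isUnit_det A).1 hA.isUnit), one_smul]
    simp [hSball, hinv, smul_mulVec]
  · have hAB := hsub z hz
    have hx := hA.posSemidef.mulVec_dotProduct_nonneg (z ∘ Sum.inl)
    have hp := hB.posSemidef.mulVec_dotProduct_nonneg (z ∘ Sum.inr)
    exact ⟨by linarith, by linarith⟩
end
end
end
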